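/- arXiv:1201.5509 — 2 statements merged into one kernel-verified Lean document; each statement's English description precedes it below -/
import Mathlib

section
/- If S is any ρ-structure (possibly without a full satisfaction relation) and σ is a logically valid ρ-sentence (⊢ σ), then S ⊨* σ, i.e., every {σ}-satisfaction relation for S satisfies σ. -/
open FirstOrder FirstOrder.Language

namespace PaperSat

variable {L : Language} {α : Type*}

/-- A formula in context: a bounded formula together with its number of bound variables. -/
abbrev Fml (L : Language) (α : Type*) : Type _ := Σ n, L.BoundedFormula α n

/-- `Sub φ ψ` means that `φ` is a subformula (or subexpression) of `ψ`. -/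
inductive Sub {L : Language} {α : Type*} : Fml L α → Fml L α → Prop
  | refl (φ : Fml L α) : Sub φ φ
  | impLeft {φ : Fml L α} {n : ℕ} (f g : L.BoundedFormula α n) :
      Sub φ ⟨n, f⟩ → Sub φ ⟨n, f.imp g⟩
  | impRight {φ : Fml L α} {n : ℕ} (f g : L.BoundedFormula α n) :
      Sub φ ⟨n, g⟩ → Sub φ ⟨n, f.imp g⟩
  | allOf {φ : Fml L α} {n : ℕ} (f : L.BoundedFormula α (n + 1)) :
      Sub φ ⟨n + 1, f⟩ → Sub φ ⟨n, f.all⟩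

/-- Membership in the subformula closure of a class `Φ` of formulas. -/
def InCl (Φ : Set (Fml L α)) (φ : Fml L α) : Prop := ∃ ψ ∈ Φ, Sub φ ψ

variable (M : Type*) [L.Structure M]

/-- `IsSatRel M Φ T` says that `T` is a `Φ`-satisfaction relation for the structure `M`:
a relation on pairs consisting of a subformula of a member of `Φ` and an assignment,
satisfying the usual Tarskian recursion clauses. -/
def IsSatRel (Φ : Set (Fml L α))
    (T : ∀ n, L.BoundedFormula α n → (α → M) → (Fin n → M) → Prop) : Prop :=
  (∀ (n : ℕ) (v : α → M) (xs : Fin n → M), InCl Φ ⟨n, BoundedFormula.falsum⟩ →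
      ¬ T n BoundedFormula.falsum v xs) ∧
  (∀ (n : ℕ) (t₁ t₂ : L.Term (α ⊕ Fin n)) (v : α → M) (xs : Fin n → M),
      InCl Φ ⟨n, t₁.bdEqual t₂⟩ →
      (T n (t₁.bdEqual t₂) v xs ↔ t₁.realize (Sum.elim v xs) = t₂.realize (Sum.elim v xs))) ∧
  (∀ (n l : ℕ) (R : L.Relations l) (ts : Fin l → L.Term (α ⊕ Fin n)) (v : α → M)
      (xs : Fin n → M), InCl Φ ⟨n, BoundedFormula.rel R ts⟩ →
      (T n (BoundedFormula.rel R ts) v xs ↔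
        Structure.RelMap R fun i => (ts i).realize (Sum.elim v xs))) ∧
  (∀ (n : ℕ) (f g : L.BoundedFormula α n) (v : α → M) (xs : Fin n → M),
      InCl Φ ⟨n, f.imp g⟩ → (T n (f.imp g) v xs ↔ (T n f v xs → T n g v xs))) ∧
  (∀ (n : ℕ) (f : L.BoundedFormula α (n + 1)) (v : α → M) (xs : Fin n → M),
      InCl Φ ⟨n, f.all⟩ → (T n f.all v xs ↔ ∀ x : M, T (n + 1) f v (Fin.snoc xs x)))

end PaperSat

namespace PaperLK

open FirstOrder FirstOrder.Language

variable {L : Language}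

/-- Instantiation of the bound variable of a formula with one extra bound variable
by a term with free variables in `ℕ`. -/
def inst1 (f : L.BoundedFormula ℕ 1) (t : L.Term ℕ) : L.Formula ℕ :=
  f.toFormula.subst (Sum.elim Term.var fun _ => t)

/-- The equality formula between two terms, as a formula with free variables in `ℕ`. -/
def eqT (t u : L.Term ℕ) : L.Formula ℕ :=
  (t.relabel Sum.inl).bdEqual (u.relabel Sum.inl)

/-- Gentzen's sequent calculus `LK` for classical first-order logic, on sequents of formulas
with free variables in `ℕ`.  The boolean parameter `cut` controls whether the cut rule is
available (`LK false eq` is the cut-free calculus `LK⁻`), and the boolean parameter `eq`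
controls whether the rules for the identity predicate are available (`eq = false` gives logic
without identity). -/
inductive LK (cut eq : Bool) : List (L.Formula ℕ) → List (L.Formula ℕ) → Prop
  | ax (φ : L.Formula ℕ) : LK cut eq [φ] [φ]
  | falsumL : LK cut eq [⊥] []
  | wL {Γ Δ} (φ) : LK cut eq Γ Δ → LK cut eq (φ :: Γ) Δ
  | wR {Γ Δ} (φ) : LK cut eq Γ Δ → LK cut eq Γ (Δ ++ [φ])
  | cL {Γ Δ} {φ} : LK cut eq (φ :: φ :: Γ) Δ → LK cut eq (φ :: Γ) Δ
  | cR {Γ Δ} {φ} : LK cut eq Γ (Δ ++ [φ, φ]) → LK cut eq Γ (Δ ++ [φ])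
  | eL {Γ₁ Γ₂ Δ} {φ ψ} : LK cut eq (Γ₁ ++ φ :: ψ :: Γ₂) Δ → LK cut eq (Γ₁ ++ ψ :: φ :: Γ₂) Δ
  | eR {Γ Δ₁ Δ₂} {φ ψ} : LK cut eq Γ (Δ₁ ++ φ :: ψ :: Δ₂) → LK cut eq Γ (Δ₁ ++ ψ :: φ :: Δ₂)
  | impL {Γ Γ' Δ Δ'} {f g : L.Formula ℕ} :
      LK cut eq Γ (Δ ++ [f]) → LK cut eq (g :: Γ') Δ' →
      LK cut eq ((f.imp g) :: (Γ ++ Γ')) (Δ ++ Δ')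
  | impR {Γ Δ} {f g : L.Formula ℕ} :
      LK cut eq (f :: Γ) (Δ ++ [g]) → LK cut eq Γ (Δ ++ [f.imp g])
  | allL {Γ Δ} {f : L.BoundedFormula ℕ 1} (t : L.Term ℕ) :
      LK cut eq ((inst1 f t) :: Γ) Δ → LK cut eq ((BoundedFormula.all f) :: Γ) Δ
  | allR {Γ Δ} {f : L.BoundedFormula ℕ 1} (k : ℕ)
      (hfresh : ∀ ψ ∈ (BoundedFormula.all f) :: (Γ ++ Δ), k ∉ ψ.freeVarFinset) :
      LK cut eq Γ (Δ ++ [inst1 f (Term.var k)]) →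
      LK cut eq Γ (Δ ++ [BoundedFormula.all f])
  | cut' {Γ Γ' Δ Δ'} {φ : L.Formula ℕ} (hc : cut = true) :
      LK cut eq Γ (Δ ++ [φ]) → LK cut eq (φ :: Γ') Δ' → LK cut eq (Γ ++ Γ') (Δ ++ Δ')
  | eqRefl (he : eq = true) (t : L.Term ℕ) : LK cut eq [] [eqT t t]
  | eqSubst {Γ Δ} {f : L.BoundedFormula ℕ 1} (he : eq = true) (t u : L.Term ℕ) :
      LK cut eq Γ (Δ ++ [inst1 f t]) → LK cut eq ((eqT t u) :: Γ) (Δ ++ [inst1 f u])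

/-- Provability of a formula from a theory (a class of formulas), via the full sequent
calculus (with cut and with the rules for identity). -/
def ThmOf (Θ : Set (L.Formula ℕ)) (σ : L.Formula ℕ) : Prop :=
  ∃ Γ : List (L.Formula ℕ), (∀ γ ∈ Γ, γ ∈ Θ) ∧ LK true true Γ [σ]

/-- A formula is a sentence if it has no free variables. -/
def ClosedF (φ : L.Formula ℕ) : Prop := φ.freeVarFinset = ∅

/-- A theory is consistent if there is no sentence such that both it and its negation
are provable. -/
def ConsistentT (Θ : Set (L.Formula ℕ)) : Prop :=
  ¬ ∃ σ : L.Formula ℕ, ClosedF σ ∧ ThmOf Θ σ ∧ ThmOf Θ σ.not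

/-- The class of formulas not containing the identity predicate. -/
inductive EqFree : ∀ {n : ℕ}, L.BoundedFormula ℕ n → Prop
  | falsum {n} : EqFree (n := n) BoundedFormula.falsum
  | rel {n l} (R : L.Relations l) (ts : Fin l → L.Term (ℕ ⊕ Fin n)) :
      EqFree (BoundedFormula.rel R ts)
  | imp {n} {f g : L.BoundedFormula ℕ n} : EqFree f → EqFree g → EqFree (f.imp g)
  | all {n} {f : L.BoundedFormula ℕ (n + 1)} : EqFree f → EqFree (BoundedFormula.all f)

end PaperLK

namespace PaperSat

open FirstOrder FirstOrder.Language PaperLK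

variable {L : Language}

/-- The universal satisfaction predicate `M ⊨* φ` for a structure `M` (possibly a proper
class) and a formula `φ`: every `{φ}`-satisfaction relation for `M` satisfies `φ` (at every
assignment of its variables). -/
def ModelsStarF (M : Type*) [L.Structure M] (φ : L.Formula ℕ) : Prop :=
  ∀ T, IsSatRel M {(⟨0, φ⟩ : Fml L ℕ)} T → ∀ (v : ℕ → M) (xs : Fin 0 → M), T 0 φ v xs

/-- `M ⊨* Θ` for a theory `Θ`: `M ⊨* φ` for every member `φ` of `Θ`. -/
def ModelsStarT (M : Type*) [L.Structure M] (Θ : Set (L.Formula ℕ)) : Prop :=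
  ∀ φ ∈ Θ, ModelsStarF M φ

/-- A structure is weakly satisfactory if for every formula `φ` there exists a
`{φ}`-satisfaction relation for it. -/
def WeaklySatisfactory (M : Type*) [L.Structure M] : Prop :=
  ∀ φ : Fml L ℕ, ∃ T, IsSatRel M {φ} T

end PaperSat

/-!
Because `M` is a type, Mathlib's `Realize` is a full satisfaction relation for it. Every
`{σ}`-satisfaction relation agrees with `Realize` on the subformulas of `σ` (induction on
formulas), and `Realize σ` holds by soundness of `LK`; so no appeal to cut elimination is needed.
-/

namespace FirstOrder.Language

variable {L : Language} {M : Type*} [L.Structure M] {α : Type*}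

theorem BoundedFormula.realize_update_of_notMem_freeVarFinset [DecidableEq α] {n : ℕ}
    (φ : L.BoundedFormula α n) {a : α} (ha : a ∉ φ.freeVarFinset) (v : α → M) (x : M)
    (xs : Fin n → M) : φ.Realize (Function.update v a x) xs ↔ φ.Realize v xs := by
  have hv : (fun b : {b // b ∈ φ.freeVarFinset} => Function.update v a x b.1) = fun b => v b.1 :=
    funext fun b => Function.update_of_ne (ne_of_mem_of_not_mem b.2 ha) _ _
  rw [← realize_restrictFreeVar (f := id) (v := fun b => v b.1) v fun _ => rfl,
    ← realize_restrictFreeVar (f := id) (v := fun b => Function.update v a x b.1) _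
      fun _ => rfl, hv]

theorem Formula.realize_all_fin_one (f : L.BoundedFormula α 1) (v : α → M) :
    Formula.Realize (BoundedFormula.all f) v ↔ ∀ x : M, f.Realize v fun _ => x := by
  refine BoundedFormula.realize_all.trans (forall_congr' fun x => ?_)
  rw [show Fin.snoc (default : Fin 0 → M) x = fun _ => x by
    funext i; fin_cases i; rfl]

end FirstOrder.Language

namespace PaperSat

variable {L : Language} {α : Type*}

theorem Sub.trans {φ ψ χ : Fml L α} (hφψ : Sub φ ψ) (hψχ : Sub ψ χ) : Sub φ χ := by
  induction hψχ with
  | refl => exact hφψ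
  | impLeft f g _ ih => exact Sub.impLeft f g ih
  | impRight f g _ ih => exact Sub.impRight f g ih
  | allOf f _ ih => exact Sub.allOf f ih

theorem InCl.of_sub {Φ : Set (Fml L α)} {φ ψ : Fml L α} (hψ : InCl Φ ψ) (hφψ : Sub φ ψ) :
    InCl Φ φ :=
  let ⟨χ, hχ, hψχ⟩ := hψ
  ⟨χ, hχ, hφψ.trans hψχ⟩

theorem IsSatRel.iff_realize {M : Type*} [L.Structure M] {Φ : Set (Fml L α)}
    {T : ∀ n, L.BoundedFormula α n → (α → M) → (Fin n → M) → Prop} (hT : IsSatRel M Φ T)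
    {n : ℕ} (φ : L.BoundedFormula α n) (hφ : InCl Φ ⟨n, φ⟩) (v : α → M) (xs : Fin n → M) :
    T n φ v xs ↔ φ.Realize v xs := by
  obtain ⟨hfalsum, hequal, hrel, himp, hall⟩ := hT
  induction φ with
  | falsum => exact iff_of_false (hfalsum _ v xs hφ) id
  | equal t₁ t₂ => exact hequal _ t₁ t₂ v xs hφ
  | rel R ts => exact hrel _ _ R ts v xs hφ
  | imp f g ihf ihg =>
    rw [himp _ f g v xs hφ, BoundedFormula.realize_imp,
      ihf (hφ.of_sub (Sub.impLeft f g (Sub.refl _))) xs,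
      ihg (hφ.of_sub (Sub.impRight f g (Sub.refl _))) xs]
  | all f ih =>
    rw [hall _ f v xs hφ, BoundedFormula.realize_all]
    exact forall_congr' fun x => ih (hφ.of_sub (Sub.allOf f (Sub.refl _))) _

end PaperSat

namespace PaperLK

variable {L : Language} {M : Type*} [L.Structure M]

theorem realize_inst1 (f : L.BoundedFormula ℕ 1) (t : L.Term ℕ) (v : ℕ → M) :
    (inst1 f t).Realize v ↔ f.Realize v fun _ => t.realize v := by
  rw [inst1, Formula.Realize, BoundedFormula.realize_subst, ← Formula.Realize,
    BoundedFormula.realize_toFormula]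
  exact Iff.rfl

theorem realize_eqT (t u : L.Term ℕ) (v : ℕ → M) :
    (eqT t u).Realize v ↔ t.realize v = u.realize v := by
  simp [eqT, Formula.Realize, Term.realize_relabel]

/-- If `∀' f` fails at `v`, witnessed by `x`, apply the premise at `v` updated to `x` at the
eigenvariable `k`; freshness of `k` transports everything back to `v`. -/
theorem realize_allR_of_fresh {Γ Δ : List (L.Formula ℕ)} {f : L.BoundedFormula ℕ 1} (k : ℕ)
    (hfresh : ∀ ψ ∈ BoundedFormula.all f :: (Γ ++ Δ), k ∉ ψ.freeVarFinset)
    (h : ∀ v : ℕ → M, (∀ γ ∈ Γ, γ.Realize v) →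
      ∃ δ ∈ Δ ++ [inst1 f (Term.var k)], δ.Realize v) (v : ℕ → M) :
    (∀ γ ∈ Γ, γ.Realize v) → ∃ δ ∈ Δ ++ [BoundedFormula.all f], δ.Realize v := by
  simp only [List.forall_mem_cons, List.forall_mem_append] at hfresh
  obtain ⟨hf, hΓ, hΔ⟩ := hfresh
  have fresh {n} (φ : L.BoundedFormula ℕ n) (h : k ∉ φ.freeVarFinset) (x : M) :=
    BoundedFormula.realize_update_of_notMem_freeVarFinset φ h v x
  intro hΓv
  by_contra! hnot
  simp only [List.mem_append, List.mem_singleton, or_imp, forall_and, forall_eq,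
    Formula.realize_all_fin_one, not_forall] at hnot
  obtain ⟨hΔv, x, hx⟩ := hnot
  obtain ⟨δ, hδ, hδv⟩ :=
    h (Function.update v k x) fun γ hγ => (fresh γ (hΓ γ hγ) x _).2 (hΓv γ hγ)
  rcases List.mem_append.1 hδ with hδ | hδ
  · exact hΔv δ hδ ((fresh δ (hΔ δ hδ) x _).1 hδv)
  · rw [List.mem_singleton.1 hδ, realize_inst1] at hδv
    simp only [Term.realize_var, Function.update_self] at hδv
    exact hx ((fresh f hf x _).1 hδv)

theorem LK.sound {cut eq : Bool} {Γ Δ : List (L.Formula ℕ)} (h : LK cut eq Γ Δ) (v : ℕ → M) :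
    (∀ γ ∈ Γ, γ.Realize v) → ∃ δ ∈ Δ, δ.Realize v := by
  induction h generalizing v with
  | ax φ => simp
  | falsumL => simp
  | wL φ _ ih => simpa using fun _ => ih v
  | wR φ _ ih => simpa using fun h => Or.inl (ih v h)
  | cL _ ih => simpa using ih v
  | cR _ ih => simpa [or_assoc] using ih v
  | eL _ ih =>
    have := ih v
    simp only [List.forall_mem_append, List.forall_mem_cons] at this ⊢
    grind
  | eR _ ih =>
    have := ih v; clear ih
    simp only [List.mem_append, List.mem_cons, exists_or, or_and_right, exists_eq_left] at this ⊢
    grind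
  | impL _ _ ih₁ ih₂ =>
    have := ih₁ v; have := ih₂ v; clear ih₁ ih₂
    simp only [List.forall_mem_cons, List.mem_append, List.mem_singleton, Formula.realize_imp,
      exists_or, or_and_right, exists_eq_left] at *
    grind
  | impR _ ih =>
    have := ih v; clear ih
    simp only [List.forall_mem_cons, List.mem_append, List.mem_singleton, Formula.realize_imp,
      exists_or, or_and_right, exists_eq_left] at this ⊢
    grind
  | allL t _ ih =>
    intro hΓ
    rw [List.forall_mem_cons, Formula.realize_all_fin_one] at hΓ
    exact ih v (List.forall_mem_cons.2 ⟨(realize_inst1 _ _ _).2 (hΓ.1 _), hΓ.2⟩)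
  | allR k hfresh _ ih => exact realize_allR_of_fresh k hfresh ih v
  | cut' _ _ _ ih₁ ih₂ =>
    have := ih₁ v; have := ih₂ v; clear ih₁ ih₂
    simp only [List.forall_mem_cons, List.forall_mem_append] at *
    simp only [List.mem_append, List.mem_singleton, exists_or, or_and_right, exists_eq_left] at *
    grind
  | eqRefl _ t => simp [realize_eqT]
  | eqSubst _ t u _ ih =>
    have := ih v; clear ih
    simp only [List.forall_mem_cons, List.mem_append, List.mem_singleton, exists_or,
      or_and_right, exists_eq_left, realize_inst1, realize_eqT] at this ⊢
    grind

end PaperLK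

namespace PaperSat

open PaperLK

theorem modelsStar_of_valid_general {L : Language} (M : Type*) [L.Structure M]
    (σ : L.Formula ℕ) (hval : ThmOf (∅ : Set (L.Formula ℕ)) σ) :
    ModelsStarF M σ := by
  obtain ⟨Γ, hΓ, hLK⟩ := hval
  intro T hT v xs
  obtain ⟨δ, hδ, hδv⟩ := hLK.sound v fun γ hγ => absurd (hΓ γ hγ) (Set.notMem_empty γ)
  rw [List.mem_singleton.1 hδ] at hδv
  rw [hT.iff_realize σ ⟨⟨0, σ⟩, rfl, Sub.refl _⟩ v xs, Subsingleton.elim xs default]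
  exact hδv

/-- If `M` is any structure (possibly without a full satisfaction relation)
and `σ` is a logically valid sentence (`⊢ σ`), then `M ⊨* σ`: every `{σ}`-satisfaction
relation for `M` satisfies `σ`. -/
theorem modelsStar_of_valid {L : Language} (M : Type*) [L.Structure M] [Nonempty M]
    (σ : L.Formula ℕ) (hσc : ClosedF σ) (hval : ThmOf (∅ : Set (L.Formula ℕ)) σ) :
    ModelsStarF M σ :=
  modelsStar_of_valid_general M σ hval

end PaperSat
end

section
/- A sequent J is derivable in LK⁻ (the cut-free sequent calculus) if and only if it is derivable in LK (with cut), if and only if every full interpretation satisfies J, if and only if every J-interpretation satisfies J. -/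
/-!
Soundness of `LK` is checked rule by rule; in the `allR` case the eigenvariable condition lets
the assignment vary at the fresh variable. A subvaluation agrees with Tarskian truth wherever
it is defined, and Tarskian truth is itself a subvaluation, so the two notions of validity
coincide.

Completeness of the cut-free calculus is Schütte's argument. If `Γ ⇒ Δ` has no cut-free proof,
decompose its formulas bottom-up in a fair order (every formula, paired with every term,
infinitely often); each stage stays unprovable, so the unions of the antecedents and of the
succedents form a Hintikka pair. The term model whose true atoms are those of the antecedent
side then satisfies the antecedent side and falsifies the succedent side. This is where identity
must be absent: the term model interprets `=` as syntactic identity of terms, which the Hintikka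
pair does not control. Countability of the signature provides the fair enumeration and makes the
term model small enough to be transported to a structure in `Type`.
-/

open FirstOrder FirstOrder.Language

namespace PaperSat

open FirstOrder FirstOrder.Language

variable {L : Language}

/-- `IsSubVal M Tt Tf` says that the pair of predicates `Tt` (assigned the value *true*) and
`Tf` (assigned the value *false*) is a subvaluation for the structure `M`: a partial
assignment of truth values to formula–assignment pairs that is consistent with the Tarskian
clauses in the weak sense (e.g. a disjunction may be assigned *true* provided at least one
disjunct is assigned *true*, and may be assigned *false* only if both disjuncts are). -/
def IsSubVal (M : Type*) [L.Structure M]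
    (Tt Tf : ∀ n, L.BoundedFormula ℕ n → (ℕ → M) → (Fin n → M) → Prop) : Prop :=
  (∀ n φ v xs, ¬ (Tt n φ v xs ∧ Tf n φ v xs)) ∧
  (∀ (n : ℕ) (v : ℕ → M) (xs : Fin n → M), ¬ Tt n BoundedFormula.falsum v xs) ∧
  (∀ (n : ℕ) (t₁ t₂ : L.Term (ℕ ⊕ Fin n)) (v : ℕ → M) (xs : Fin n → M),
    (Tt n (t₁.bdEqual t₂) v xs → t₁.realize (Sum.elim v xs) = t₂.realize (Sum.elim v xs)) ∧
    (Tf n (t₁.bdEqual t₂) v xs → t₁.realize (Sum.elim v xs) ≠ t₂.realize (Sum.elim v xs))) ∧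
  (∀ (n l : ℕ) (R : L.Relations l) (ts : Fin l → L.Term (ℕ ⊕ Fin n)) (v : ℕ → M)
      (xs : Fin n → M),
    (Tt n (BoundedFormula.rel R ts) v xs →
      Structure.RelMap R (fun i => (ts i).realize (Sum.elim v xs))) ∧
    (Tf n (BoundedFormula.rel R ts) v xs →
      ¬ Structure.RelMap R (fun i => (ts i).realize (Sum.elim v xs)))) ∧
  (∀ (n : ℕ) (f g : L.BoundedFormula ℕ n) (v : ℕ → M) (xs : Fin n → M),
    (Tt n (f.imp g) v xs → (Tf n f v xs ∨ Tt n g v xs)) ∧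
    (Tf n (f.imp g) v xs → (Tt n f v xs ∧ Tf n g v xs))) ∧
  (∀ (n : ℕ) (f : L.BoundedFormula ℕ (n + 1)) (v : ℕ → M) (xs : Fin n → M),
    (Tt n (BoundedFormula.all f) v xs → ∀ x : M, Tt (n + 1) f v (Fin.snoc xs x)) ∧
    (Tf n (BoundedFormula.all f) v xs → ∃ x : M, Tf (n + 1) f v (Fin.snoc xs x)))

end PaperSat

namespace PaperSat

open PaperLK

/-- A full interpretation (a structure together with an assignment of all variables,
satisfaction being full Tarskian satisfaction) satisfies the sequent `Γ ⇒ Δ`. -/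
def FullValid (L : Language) (Γ Δ : List (L.Formula ℕ)) : Prop :=
  ∀ (M : Type) (_ : L.Structure M), Nonempty M → ∀ v : ℕ → M,
    (∀ φ ∈ Γ, Formula.Realize φ v) → ∃ φ ∈ Δ, Formula.Realize φ v

/-- Every `J`-interpretation (a structure, an assignment, and a subvaluation assigning a
truth value to each formula of `J`) satisfies the sequent `Γ ⇒ Δ`. -/
def SubValid (L : Language) (Γ Δ : List (L.Formula ℕ)) : Prop :=
  ∀ (M : Type) (_ : L.Structure M), Nonempty M → ∀ (v : ℕ → M)
    (Tt Tf : ∀ n, L.BoundedFormula ℕ n → (ℕ → M) → (Fin n → M) → Prop),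
    IsSubVal M Tt Tf →
    (∀ φ ∈ Γ ++ Δ, Tt 0 φ v (fun i => i.elim0) ∨ Tf 0 φ v (fun i => i.elim0)) →
    (∀ φ ∈ Γ, Tt 0 φ v (fun i => i.elim0)) →
    ∃ φ ∈ Δ, Tt 0 φ v (fun i => i.elim0)

end PaperSat

namespace PaperLK

open FirstOrder FirstOrder.Language

variable {L : Language} {c e : Bool} {Γ Γ' Δ Δ' : List (L.Formula ℕ)} {φ : L.Formula ℕ}

namespace LK

theorem perm_left (hp : Γ.Perm Γ') (h : LK c e Γ Δ) : LK c e Γ' Δ := by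
  suffices ∀ {l₁ l₂ : List (L.Formula ℕ)}, l₁.Perm l₂ →
      ∀ Γ₁, LK c e (Γ₁ ++ l₁) Δ → LK c e (Γ₁ ++ l₂) Δ from this hp [] h
  intro l₁ l₂ hp
  induction hp with
  | nil => exact fun _ h => h
  | cons x _ ih => exact fun Γ₁ h => by simpa using ih (Γ₁ ++ [x]) (by simpa using h)
  | swap x y l => exact fun Γ₁ h => eL h
  | trans _ _ ih₁ ih₂ => exact fun Γ₁ h => ih₂ Γ₁ (ih₁ Γ₁ h)

theorem perm_right (hp : Δ.Perm Δ') (h : LK c e Γ Δ) : LK c e Γ Δ' := by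
  suffices ∀ {l₁ l₂ : List (L.Formula ℕ)}, l₁.Perm l₂ →
      ∀ Δ₁, LK c e Γ (Δ₁ ++ l₁) → LK c e Γ (Δ₁ ++ l₂) from this hp [] h
  intro l₁ l₂ hp
  induction hp with
  | nil => exact fun _ h => h
  | cons x _ ih => exact fun Δ₁ h => by simpa using ih (Δ₁ ++ [x]) (by simpa using h)
  | swap x y l => exact fun Δ₁ h => eR h
  | trans _ _ ih₁ ih₂ => exact fun Δ₁ h => ih₂ Δ₁ (ih₁ Δ₁ h)

theorem weaken_left (Γ₀ : List (L.Formula ℕ)) (h : LK c e Γ Δ) : LK c e (Γ₀ ++ Γ) Δ := by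
  induction Γ₀ with
  | nil => exact h
  | cons φ Γ₀ ih => exact wL φ ih

theorem weaken_right (Δ₀ : List (L.Formula ℕ)) (h : LK c e Γ Δ) : LK c e Γ (Δ ++ Δ₀) := by
  induction Δ₀ generalizing Δ with
  | nil => simpa using h
  | cons φ Δ₀ ih => simpa using ih (wR φ h)

theorem contract_left (hφ : φ ∈ Γ) (h : LK c e (φ :: Γ) Δ) : LK c e Γ Δ := by
  obtain ⟨s, t, rfl⟩ := List.append_of_mem hφ
  exact (cL (h.perm_left (List.perm_middle.cons φ))).perm_left List.perm_middle.symm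

theorem contract_right (hφ : φ ∈ Δ) (h : LK c e Γ (Δ ++ [φ])) : LK c e Γ Δ := by
  obtain ⟨s, t, rfl⟩ := List.append_of_mem hφ
  have hp : (s ++ φ :: t).Perm (s ++ t ++ [φ]) :=
    List.perm_middle.trans (List.perm_append_singleton _ _).symm
  exact (cR (h.perm_right (by simpa using hp.append_right [φ]))).perm_right hp.symm

theorem contract_left_of_subset {Γ₀ : List (L.Formula ℕ)} (hs : Γ₀ ⊆ Γ)
    (h : LK c e (Γ₀ ++ Γ) Δ) : LK c e Γ Δ := by
  induction Γ₀ with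
  | nil => exact h
  | cons φ Γ₀ ih =>
    obtain ⟨hφ, hs⟩ := List.cons_subset.1 hs
    exact ih hs (contract_left (List.mem_append_right _ hφ) h)

theorem contract_right_of_subset {Δ₀ : List (L.Formula ℕ)} (hs : Δ₀ ⊆ Δ)
    (h : LK c e Γ (Δ₀ ++ Δ)) : LK c e Γ Δ := by
  induction Δ₀ with
  | nil => exact h
  | cons φ Δ₀ ih =>
    obtain ⟨hφ, hs⟩ := List.cons_subset.1 hs
    exact ih hs (contract_right (List.mem_append_right _ hφ)
      (h.perm_right (List.perm_append_singleton _ _).symm))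

theorem mono (h : LK c e Γ Δ) (hΓ : Γ ⊆ Γ') (hΔ : Δ ⊆ Δ') : LK c e Γ' Δ' := by
  have hw : LK c e (Γ' ++ Γ) (Δ ++ Δ') := (h.weaken_right Δ').weaken_left Γ'
  exact contract_right_of_subset hΔ <| contract_left_of_subset hΓ <|
    hw.perm_left List.perm_append_comm

theorem of_mem_of_mem (hΓ : φ ∈ Γ) (hΔ : φ ∈ Δ) : LK c e Γ Δ :=
  (ax φ).mono (by simpa) (by simpa)

theorem of_falsum_mem (h : ⊥ ∈ Γ) : LK c e Γ Δ :=
  falsumL.mono (by simpa) (List.nil_subset _)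

theorem withCut (h : LK c e Γ Δ) : LK true e Γ Δ := by
  induction h with
  | ax φ => exact ax φ
  | falsumL => exact falsumL
  | wL φ _ ih => exact wL φ ih
  | wR φ _ ih => exact wR φ ih
  | cL _ ih => exact cL ih
  | cR _ ih => exact cR ih
  | eL _ ih => exact eL ih
  | eR _ ih => exact eR ih
  | impL _ _ ih₁ ih₂ => exact impL ih₁ ih₂
  | impR _ ih => exact impR ih
  | allL t _ ih => exact allL t ih
  | allR k hfresh _ ih => exact allR k hfresh ih
  | cut' _ _ _ ih₁ ih₂ => exact cut' rfl ih₁ ih₂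
  | eqRefl he t => exact eqRefl he t
  | eqSubst he t u _ ih => exact eqSubst he t u ih

end LK

end PaperLK

namespace PaperSat

open FirstOrder FirstOrder.Language PaperLK

variable {L : Language} {Γ Γ' Δ Δ' : List (L.Formula ℕ)}

theorem realize_update_of_notMem_freeVarFinset {M α : Type*} [L.Structure M] [DecidableEq α]
    {n : ℕ} {k : α} {φ : L.BoundedFormula α n} (hk : k ∉ φ.freeVarFinset) (v : α → M) (a : M)
    (xs : Fin n → M) : φ.Realize (Function.update v k a) xs ↔ φ.Realize v xs :=
  (BoundedFormula.realize_restrictFreeVar (f := id) (v := fun b => v b) _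
      fun b => (Function.update_of_ne (ne_of_mem_of_not_mem b.2 hk) _ _).symm).symm.trans
    (BoundedFormula.realize_restrictFreeVar v fun _ => rfl)

theorem realize_all_formula {M α : Type*} [L.Structure M] (f : L.BoundedFormula α 1)
    (v : α → M) : Formula.Realize (BoundedFormula.all f) v ↔ ∀ a : M, f.Realize v fun _ => a := by
  simp [Formula.Realize, Fin.snoc_zero]

theorem realize_inst1 {M : Type*} [L.Structure M] (f : L.BoundedFormula ℕ 1) (t : L.Term ℕ)
    (v : ℕ → M) : (inst1 f t).Realize v ↔ f.Realize v fun _ => t.realize v := by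
  rw [inst1, Formula.Realize, BoundedFormula.realize_subst, ← Formula.Realize,
    BoundedFormula.realize_toFormula]
  rfl

theorem FullValid.mono (h : FullValid L Γ Δ) (hΓ : Γ ⊆ Γ') (hΔ : Δ ⊆ Δ') :
    FullValid L Γ' Δ' := fun M _ hM v hv =>
  let ⟨φ, hφ, hr⟩ := h M _ hM v fun φ hφ => hv φ (hΓ hφ)
  ⟨φ, hΔ hφ, hr⟩

theorem exists_mem_append_singleton {α : Type*} {l : List α} {a : α} {p : α → Prop} :
    (∃ x ∈ l ++ [a], p x) ↔ (∃ x ∈ l, p x) ∨ p a := by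
  simp [or_and_right, exists_or]

theorem _root_.PaperLK.LK.fullValid {c : Bool} (h : LK c false Γ Δ) : FullValid L Γ Δ := by
  induction h with
  | ax φ => exact fun M _ _ v hv => ⟨φ, by simp, hv φ (by simp)⟩
  | falsumL => exact fun M _ _ v hv => absurd (hv ⊥ (by simp)) (by simp)
  | wL | wR | cL | cR | eL | eR =>
    refine FullValid.mono ‹_› ?_ ?_ <;> intro x <;> grind
  | impL _ _ ih₁ ih₂ | cut' _ _ _ ih₁ ih₂ =>
    intro M S hM v hv
    have h₁ := ih₁ M S hM v
    have h₂ := ih₂ M S hM v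
    simp only [List.forall_mem_cons, List.forall_mem_append, Formula.realize_imp] at hv h₂
    grind
  | @impR Γ Δ f g _ ih =>
    intro M S hM v hv
    rw [exists_mem_append_singleton, Formula.realize_imp]
    by_cases hf : f.Realize v
    · have h₁ := ih M S hM v (List.forall_mem_cons.2 ⟨hf, hv⟩)
      rw [exists_mem_append_singleton] at h₁
      exact h₁.imp_right fun hg _ => hg
    · exact Or.inr fun h => absurd h hf
  | @allL Γ Δ f t _ ih =>
    intro M S hM v hv
    rw [List.forall_mem_cons] at hv
    refine ih M S hM v (List.forall_mem_cons.2 ⟨?_, hv.2⟩)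
    exact (realize_inst1 f t v).2 ((realize_all_formula f v).1 hv.1 _)
  | @allR Γ Δ f k hfresh _ ih =>
    intro M S hM v hv
    rw [exists_mem_append_singleton, or_iff_not_imp_left, realize_all_formula]
    intro hΔ a
    have h₁ := ih M S hM (Function.update v k a) fun φ hφ =>
      (realize_update_of_notMem_freeVarFinset (hfresh φ (by simp [hφ])) v a _).2 (hv φ hφ)
    rw [exists_mem_append_singleton, realize_inst1] at h₁
    rcases h₁ with ⟨ψ, hψ, hr⟩ | hr
    · exact absurd ⟨ψ, hψ,
        (realize_update_of_notMem_freeVarFinset (hfresh ψ (by simp [hψ])) v a _).1 hr⟩ hΔ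
    · have hk : k ∉ f.freeVarFinset := hfresh _ List.mem_cons_self
      simpa [realize_update_of_notMem_freeVarFinset hk] using hr
  | eqRefl he | eqSubst he => exact absurd he Bool.false_ne_true

theorem IsSubVal.sound {M : Type*} [L.Structure M] {Tt Tf} (h : IsSubVal M Tt Tf) {n : ℕ}
    (φ : L.BoundedFormula ℕ n) (v : ℕ → M) (xs : Fin n → M) :
    (Tt n φ v xs → φ.Realize v xs) ∧ (Tf n φ v xs → ¬ φ.Realize v xs) := by
  obtain ⟨-, hfalsum, hequal, hrel, himp, hall⟩ := h
  induction φ with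
  | falsum => exact ⟨fun ht => absurd ht (hfalsum _ v xs), fun _ => id⟩
  | equal t₁ t₂ => exact hequal _ t₁ t₂ v xs
  | rel R ts => exact hrel _ _ R ts v xs
  | imp f g ihf ihg =>
    simp only [BoundedFormula.realize_imp]
    refine ⟨fun ht hf => ?_, fun hfl hr => ?_⟩
    · exact ((himp _ f g v xs).1 ht).elim (fun hff => absurd hf ((ihf xs).2 hff)) (ihg xs).1
    · obtain ⟨htf, hfg⟩ := (himp _ f g v xs).2 hfl
      exact (ihg xs).2 hfg (hr ((ihf xs).1 htf))
  | all f ih =>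
    simp only [BoundedFormula.realize_all]
    refine ⟨fun ht a => (ih _).1 ((hall _ f v xs).1 ht a), fun hfl hr => ?_⟩
    obtain ⟨a, ha⟩ := (hall _ f v xs).2 hfl
    exact (ih _).2 ha (hr a)

theorem isSubVal_realize (M : Type*) [L.Structure M] :
    IsSubVal (L := L) M (fun _ φ v xs => φ.Realize v xs) (fun _ φ v xs => ¬ φ.Realize v xs) := by
  refine ⟨fun _ _ _ _ h => h.2 h.1, ?_, ?_, ?_, ?_, ?_⟩ <;> intros <;>
    simp [BoundedFormula.Realize, imp_iff_not_or]

theorem realize_elim0 {M α : Type*} [L.Structure M] (φ : L.Formula α) (v : α → M) :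
    BoundedFormula.Realize φ v (fun i => i.elim0) ↔ Formula.Realize φ v := by
  rw [Formula.Realize, Unique.eq_default fun i : Fin 0 => i.elim0]

theorem fullValid_iff_subValid : FullValid L Γ Δ ↔ SubValid L Γ Δ := by
  constructor
  · intro h M S hM v Tt Tf hsv htot hΓ
    obtain ⟨φ, hφ, hr⟩ := h M S hM v fun φ hφ =>
      (realize_elim0 φ v).1 ((hsv.sound φ v _).1 (hΓ φ hφ))
    refine ⟨φ, hφ, (htot φ (List.mem_append_right _ hφ)).resolve_right fun hf => ?_⟩
    exact (hsv.sound φ v _).2 hf ((realize_elim0 φ v).2 hr)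
  · intro h M S hM v hΓ
    obtain ⟨φ, hφ, hr⟩ := h M S hM v _ _ (isSubVal_realize M) (fun φ _ => em _)
      fun φ hφ => (realize_elim0 φ v).2 (hΓ φ hφ)
    exact ⟨φ, hφ, (realize_elim0 φ v).1 hr⟩

/-- Instantiating a quantifier changes the terms of a formula but not its shape, so the truth
lemma for the term model is proved by induction on the shape. -/
inductive Shape
  | falsum
  | equal
  | rel
  | imp (s t : Shape)
  | all (s : Shape)

def Shape.EqFree : Shape → Prop
  | .equal => False
  | .imp s t => s.EqFree ∧ t.EqFree
  | .all s => s.EqFree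
  | _ => True

def shape {α : Type*} : ∀ {n : ℕ}, L.BoundedFormula α n → Shape
  | _, .falsum => .falsum
  | _, .equal _ _ => .equal
  | _, .rel _ _ => .rel
  | _, .imp f g => .imp (shape f) (shape g)
  | _, .all f => .all (shape f)

section Shape

variable {α β : Type*}

theorem shape_mapTermRel {g : ℕ → ℕ} (ft : ∀ n, L.Term (α ⊕ Fin n) → L.Term (β ⊕ Fin (g n)))
    (fr : ∀ n, L.Relations n → L.Relations n)
    (h : ∀ n, L.BoundedFormula β (g (n + 1)) → L.BoundedFormula β (g n + 1))
    (hh : ∀ n φ, shape (h n φ) = shape φ) {n : ℕ} (φ : L.BoundedFormula α n) :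
    shape (φ.mapTermRel ft fr h) = shape φ := by
  induction φ with
  | falsum | equal | rel => rfl
  | imp f g ihf ihg => simp only [BoundedFormula.mapTermRel, shape, ihf, ihg]
  | all f ih => simp only [BoundedFormula.mapTermRel, shape, hh, ih]

theorem shape_castLE {m n : ℕ} (hmn : m ≤ n) (φ : L.BoundedFormula α m) :
    shape (φ.castLE hmn) = shape φ := by
  induction φ generalizing n with
  | falsum | equal | rel => rfl
  | imp f g ihf ihg => simp only [BoundedFormula.castLE, shape, ihf, ihg]
  | all f ih => simp only [BoundedFormula.castLE, shape, ih]

theorem shape_relabel {n k : ℕ} (g : α → β ⊕ Fin n) (φ : L.BoundedFormula α k) :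
    shape (φ.relabel g) = shape φ :=
  shape_mapTermRel _ _ _ (fun _ _ => shape_castLE _ _) φ

theorem shape_subst {n : ℕ} (φ : L.BoundedFormula α n) (tf : α → L.Term β) :
    shape (φ.subst tf) = shape φ := by
  rw [BoundedFormula.subst]
  exact shape_mapTermRel (g := id) _ _ (fun _ => id) (fun _ _ => rfl) φ

theorem shape_toFormula {n : ℕ} (φ : L.BoundedFormula α n) : shape φ.toFormula = shape φ := by
  induction φ with
  | falsum | equal | rel => rfl
  | imp f g ihf ihg => simp only [BoundedFormula.toFormula, shape, ihf, ihg]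
  | all f ih => simp only [BoundedFormula.toFormula, shape, shape_relabel, ih]

theorem shape_inst1 (f : L.BoundedFormula ℕ 1) (t : L.Term ℕ) : shape (inst1 f t) = shape f := by
  rw [inst1, shape_subst, shape_toFormula]

end Shape

theorem _root_.PaperLK.EqFree.shape_eqFree {n : ℕ} {φ : L.BoundedFormula ℕ n} (h : EqFree φ) :
    (shape φ).EqFree := by
  induction h with
  | falsum | rel => trivial
  | imp _ _ ihf ihg => exact ⟨ihf, ihg⟩
  | all _ ih => exact ih

structure IsHintikkaPair (S T : Set (L.Formula ℕ)) : Prop where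
  disjoint : Disjoint S T
  falsum_notMem : ⊥ ∉ S
  imp_left : ∀ f g : L.Formula ℕ, f.imp g ∈ S → f ∈ T ∨ g ∈ S
  imp_right : ∀ f g : L.Formula ℕ, f.imp g ∈ T → f ∈ S ∧ g ∈ T
  all_left : ∀ f : L.BoundedFormula ℕ 1, f.all ∈ S → ∀ t, inst1 f t ∈ S
  all_right : ∀ f : L.BoundedFormula ℕ 1, f.all ∈ T → ∃ t, inst1 f t ∈ T

/-- A copy of `L.Term ℕ`, so that the structure on it may depend on `S`. -/
@[ext]
structure TermModel (S : Set (L.Formula ℕ)) where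
  term : L.Term ℕ

namespace TermModel

variable {S : Set (L.Formula ℕ)}

instance : L.Structure (TermModel S) where
  funMap f ts := ⟨Term.func f fun i => (ts i).term⟩
  RelMap R ts := BoundedFormula.rel R (fun i => (ts i).term.relabel Sum.inl) ∈ S

instance [Countable (Σ l, L.Functions l)] : Countable (TermModel S) :=
  Function.Injective.countable fun _ _ => TermModel.ext

def vars (S : Set (L.Formula ℕ)) (k : ℕ) : TermModel S := ⟨Term.var k⟩

theorem realize_vars (t : L.Term ℕ) : t.realize (vars S) = ⟨t⟩ := by
  induction t with
  | var => rfl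
  | func f ts ih =>
    simp only [Term.realize, ih]
    rfl

theorem relabel_realize_vars (xs : Fin 0 → TermModel S) (t : L.Term (ℕ ⊕ Fin 0)) :
    (t.realize (Sum.elim (vars S) xs)).term.relabel Sum.inl = t := by
  induction t with
  | var a => cases a with
    | inl => rfl
    | inr i => exact i.elim0
  | func f ts ih => exact congrArg (Term.func f) (funext ih)

theorem realize_rel {l : ℕ} (R : L.Relations l) (ts : Fin l → L.Term (ℕ ⊕ Fin 0)) :
    Formula.Realize (BoundedFormula.rel R ts) (vars S) ↔ BoundedFormula.rel R ts ∈ S := by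
  show BoundedFormula.rel R (fun i => _) ∈ S ↔ _
  simp only [relabel_realize_vars]

end TermModel

theorem IsHintikkaPair.realize_termModel {S T : Set (L.Formula ℕ)} (h : IsHintikkaPair S T)
    {φ : L.Formula ℕ} (hφ : (shape φ).EqFree) :
    (φ ∈ S → φ.Realize (TermModel.vars S)) ∧ (φ ∈ T → ¬ φ.Realize (TermModel.vars S)) := by
  generalize hs : shape φ = s at hφ
  induction s generalizing φ with
  | falsum =>
    cases φ <;> cases hs
    exact ⟨fun hS => absurd hS h.falsum_notMem, fun _ => id⟩
  | equal => exact hφ.elim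
  | rel =>
    cases φ <;> cases hs
    rw [TermModel.realize_rel]
    exact ⟨id, fun hT hS => Set.disjoint_left.1 h.disjoint hS hT⟩
  | imp s t ihs iht =>
    cases φ <;> cases hs
    rename_i f g
    have ihf := ihs rfl hφ.1
    have ihg := iht rfl hφ.2
    simp only [Formula.realize_imp]
    refine ⟨fun hS hf => ?_, fun hT hr => ?_⟩
    · exact (h.imp_left f g hS).elim (fun hfT => absurd hf (ihf.2 hfT)) ihg.1
    · obtain ⟨hfS, hgT⟩ := h.imp_right f g hT
      exact ihg.2 hgT (hr (ihf.1 hfS))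
  | all s ih =>
    cases φ <;> cases hs
    rename_i f
    have ihf : ∀ t, _ := fun t => ih (shape_inst1 f t) hφ
    simp only [realize_all_formula]
    refine ⟨fun hS a => ?_, fun hT hr => ?_⟩
    · simpa [realize_inst1, TermModel.realize_vars] using (ihf a.term).1 (h.all_left f hS a.term)
    · obtain ⟨t, ht⟩ := h.all_right f hT
      exact (ihf t).2 ht (by simpa [realize_inst1, TermModel.realize_vars] using hr ⟨t⟩)

def freshVar (l : List (L.Formula ℕ)) : ℕ := (l.map fun φ => φ.freeVarFinset.sup id).sum + 1

theorem freshVar_notMem {l : List (L.Formula ℕ)} {φ : L.Formula ℕ} (hφ : φ ∈ l) :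
    freshVar l ∉ φ.freeVarFinset := fun hk => by
  have := (Finset.le_sup (f := id) hk).trans (List.le_sum_of_mem
    (List.mem_map_of_mem (f := fun φ : L.Formula ℕ => φ.freeVarFinset.sup id) hφ))
  simp only [freshVar, id] at this
  omega

abbrev Sequent (L : Language) : Type _ := List (L.Formula ℕ) × List (L.Formula ℕ)

section Saturation

open scoped Classical

/-- A step of bottom-up cut-free proof search on the given formula. For an implication in the
antecedent it follows a premise of `impL` that is not provable, if there is one. -/
noncomputable def Sequent.reduce (p : Sequent L) (t : L.Term ℕ) : L.Formula ℕ → Sequent L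
  | .imp f g =>
    if f.imp g ∈ p.1 then
      if LK false false (g :: p.1) p.2 then (p.1, p.2 ++ [f]) else (g :: p.1, p.2)
    else if f.imp g ∈ p.2 then (f :: p.1, p.2 ++ [g]) else p
  | .all f =>
    if f.all ∈ p.1 then (inst1 f t :: p.1, p.2)
    else if f.all ∈ p.2 then (p.1, p.2 ++ [inst1 f (.var (freshVar (p.1 ++ p.2)))]) else p
  | _ => p

variable {p : Sequent L}

theorem Sequent.subset_reduce (t : L.Term ℕ) (φ : L.Formula ℕ) :
    p.1 ⊆ (p.reduce t φ).1 ∧ p.2 ⊆ (p.reduce t φ).2 := by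
  cases φ with
  | imp f g => simp only [reduce]; split_ifs <;> simp
  | all f => simp only [reduce]; split_ifs <;> simp
  | _ => exact ⟨List.Subset.refl _, List.Subset.refl _⟩

theorem Sequent.not_LK_reduce (h : ¬ LK false false p.1 p.2) (t : L.Term ℕ) (φ : L.Formula ℕ) :
    ¬ LK false false (p.reduce t φ).1 (p.reduce t φ).2 := by
  cases φ with
  | imp f g =>
    simp only [reduce]
    split_ifs with hl hg hr
    · exact fun hf => h ((LK.impL hf hg).mono (by simp [hl]) (by simp))
    · exact hg
    · exact fun hd => h (LK.contract_right hr (LK.impR hd))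
    · exact h
  | all f =>
    simp only [reduce]
    split_ifs with hl hr
    · exact fun hd => h (LK.contract_left hl (LK.allL t hd))
    · refine fun hd => h (LK.contract_right hr (LK.allR _ (fun ψ hψ => ?_) hd))
      rcases List.mem_cons.1 hψ with rfl | hψ
      · exact freshVar_notMem (List.mem_append_right _ hr)
      · exact freshVar_notMem hψ
    · exact h
  | _ => exact h

noncomputable def Sequent.chain (p : Sequent L) (task : ℕ → L.Formula ℕ × L.Term ℕ) :
    ℕ → Sequent L
  | 0 => p
  | n + 1 => (p.chain task n).reduce (task n).2 (task n).1

variable {task : ℕ → L.Formula ℕ × L.Term ℕ}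

theorem Sequent.chain_mono {m n : ℕ} (hmn : m ≤ n) :
    (p.chain task m).1 ⊆ (p.chain task n).1 ∧ (p.chain task m).2 ⊆ (p.chain task n).2 := by
  induction n, hmn using Nat.le_induction with
  | base => exact ⟨List.Subset.refl _, List.Subset.refl _⟩
  | succ n _ ih =>
    obtain ⟨h₁, h₂⟩ := (p.chain task n).subset_reduce (task n).2 (task n).1
    exact ⟨List.Subset.trans ih.1 h₁, List.Subset.trans ih.2 h₂⟩

theorem Sequent.not_LK_chain (h : ¬ LK false false p.1 p.2) (n : ℕ) :
    ¬ LK false false (p.chain task n).1 (p.chain task n).2 := by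
  induction n with
  | zero => exact h
  | succ n ih => exact not_LK_reduce ih _ _

theorem Sequent.chain_disjoint (h : ¬ LK false false p.1 p.2) {φ : L.Formula ℕ} {m n : ℕ}
    (hm : φ ∈ (p.chain task m).1) (hn : φ ∈ (p.chain task n).2) : False :=
  not_LK_chain h (max m n) <| LK.of_mem_of_mem ((chain_mono (le_max_left m n)).1 hm)
    ((chain_mono (le_max_right m n)).2 hn)

theorem Sequent.isHintikkaPair_chain (h : ¬ LK false false p.1 p.2)
    (htask : ∀ q, ∃ᶠ n in Filter.atTop, task n = q) :
    IsHintikkaPair {φ | ∃ n, φ ∈ (p.chain task n).1} {φ | ∃ n, φ ∈ (p.chain task n).2} := by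
  have hstep : ∀ (q : L.Formula ℕ × L.Term ℕ) m,
      ∃ n ≥ m, p.chain task (n + 1) = (p.chain task n).reduce q.2 q.1 := fun q m =>
    let ⟨n, hn, hq⟩ := Filter.frequently_atTop.1 (htask q) m
    ⟨n, hn, by simp [chain, hq]⟩
  refine ⟨Set.disjoint_left.2 fun φ ⟨m, hm⟩ ⟨n, hn⟩ => chain_disjoint h hm hn,
    fun ⟨n, hn⟩ => not_LK_chain h n (LK.of_falsum_mem hn), ?_, ?_, ?_, ?_⟩
  · rintro f g ⟨m, hm⟩
    obtain ⟨n, hmn, hn⟩ := hstep (f.imp g, .var 0) m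
    have hmem := (chain_mono hmn).1 hm
    by_cases hd : LK false false (g :: (p.chain task n).1) (p.chain task n).2
    · exact Or.inl ⟨n + 1, by simp [hn, reduce, hmem, hd]⟩
    · exact Or.inr ⟨n + 1, by simp [hn, reduce, hmem, hd]⟩
  · rintro f g ⟨m, hm⟩
    obtain ⟨n, hmn, hn⟩ := hstep (f.imp g, .var 0) m
    have hmem := (chain_mono hmn).2 hm
    have hnot : f.imp g ∉ (p.chain task n).1 := fun h' => chain_disjoint h h' hmem
    exact ⟨⟨n + 1, by simp [hn, reduce, hmem, hnot]⟩, ⟨n + 1, by simp [hn, reduce, hmem, hnot]⟩⟩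
  · rintro f ⟨m, hm⟩ t
    obtain ⟨n, hmn, hn⟩ := hstep (f.all, t) m
    exact ⟨n + 1, by simp [hn, reduce, (chain_mono hmn).1 hm]⟩
  · rintro f ⟨m, hm⟩
    obtain ⟨n, hmn, hn⟩ := hstep (f.all, .var 0) m
    have hmem := (chain_mono hmn).2 hm
    have hnot : f.all ∉ (p.chain task n).1 := fun h' => chain_disjoint h h' hmem
    exact ⟨.var (freshVar ((p.chain task n).1 ++ (p.chain task n).2)), n + 1,
      by simp [hn, reduce, hmem, hnot]⟩

end Saturation

theorem exists_seq_frequently_eq (α : Type*) [Countable α] [Nonempty α] :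
    ∃ f : ℕ → α, ∀ a, ∃ᶠ n in Filter.atTop, f n = a := by
  obtain ⟨g, hg⟩ := exists_surjective_nat α
  refine ⟨fun n => g n.unpair.2, fun a => Filter.frequently_atTop.2 fun m => ?_⟩
  obtain ⟨j, rfl⟩ := hg a
  exact ⟨Nat.pair m j, Nat.left_le_pair m j, by simp⟩

theorem exists_isHintikkaPair_of_not_LK [Countable (Σ l, L.Functions l)]
    [Countable (Σ l, L.Relations l)] (h : ¬ LK false false Γ Δ) :
    ∃ S T : Set (L.Formula ℕ), IsHintikkaPair S T ∧ (∀ φ ∈ Γ, φ ∈ S) ∧ ∀ φ ∈ Δ, φ ∈ T := by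
  have : Nonempty (L.Formula ℕ × L.Term ℕ) := ⟨(⊥, .var 0)⟩
  obtain ⟨task, htask⟩ := exists_seq_frequently_eq (L.Formula ℕ × L.Term ℕ)
  exact ⟨_, _, Sequent.isHintikkaPair_chain (p := (Γ, Δ)) h htask,
    fun _ hφ => ⟨0, hφ⟩, fun _ hφ => ⟨0, hφ⟩⟩

theorem FullValid.realize_of_small {M : Type*} [L.Structure M] [Small.{0} M]
    (h : FullValid L Γ Δ) (v : ℕ → M) (hΓ : ∀ φ ∈ Γ, φ.Realize v) : ∃ φ ∈ Δ, φ.Realize v := by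
  let _ := Equiv.inducedStructure (L := L) (equivShrink M)
  let e := Equiv.inducedStructureEquiv (L := L) (equivShrink M)
  obtain ⟨φ, hφ, hr⟩ := h (Shrink M) _ ⟨e (v 0)⟩ (e ∘ v) fun φ hφ =>
    (StrongHomClass.realize_formula e φ).2 (hΓ φ hφ)
  exact ⟨φ, hφ, (StrongHomClass.realize_formula e φ).1 hr⟩

theorem _root_.PaperLK.LK.of_fullValid [Countable (Σ l, L.Functions l)]
    [Countable (Σ l, L.Relations l)] (hEq : ∀ φ ∈ Γ ++ Δ, EqFree φ) (h : FullValid L Γ Δ) :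
    LK false false Γ Δ := by
  by_contra hn
  obtain ⟨S, T, hST, hΓ, hΔ⟩ := exists_isHintikkaPair_of_not_LK hn
  have htruth : ∀ φ ∈ Γ ++ Δ, _ := fun φ hφ => hST.realize_termModel (hEq φ hφ).shape_eqFree
  obtain ⟨φ, hφ, hr⟩ := h.realize_of_small (TermModel.vars S) fun φ hφ =>
    (htruth φ (List.mem_append_left _ hφ)).1 (hΓ φ hφ)
  exact (htruth φ (List.mem_append_right _ hφ)).2 (hΔ φ hφ) hr

/-- (For classical first-order logic without identity, in a countable
signature.)  A sequent `J` is derivable in cut-free `LK⁻` iff it is derivable in `LK` (with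
cut), iff every full interpretation satisfies `J`, iff every `J`-interpretation satisfies
`J`. -/
theorem LKminus_LK_full_sub_equiv (L : Language)
    [Countable (Σ l, L.Functions l)] [Countable (Σ l, L.Relations l)]
    (Γ Δ : List (L.Formula ℕ)) (hEq : ∀ φ ∈ Γ ++ Δ, EqFree φ) :
    (LK (L := L) false false Γ Δ ↔ LK (L := L) true false Γ Δ) ∧
    (LK (L := L) true false Γ Δ ↔ FullValid L Γ Δ) ∧
    (FullValid L Γ Δ ↔ SubValid L Γ Δ) := by
  have complete : FullValid L Γ Δ → LK false false Γ Δ := LK.of_fullValid hEq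
  exact ⟨⟨LK.withCut, fun h => complete h.fullValid⟩,
    ⟨LK.fullValid, fun h => (complete h).withCut⟩, fullValid_iff_subValid⟩

end PaperSat
end
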